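/- arXiv:2008.10326 — 8 statements merged into one kernel-verified Lean document; each statement's English description precedes it below -/
import Mathlib

section
/- Let x, x', y be real numbers with 0 < x, x' < x and x < y, and let γ ∈ [0, 1). Then there exists a wager λ > 0 satisfying the three completeness inequalities (1) x·(1-γ) - λ·γ - x' > -x', (2) 0 > x·γ - λ·(1-γ), and (3) y - x > y·γ - (x+λ)·(1-γ), if and only if γ < 1/2. -/
/-- Completeness of the escrow contract: for price `x > 0`, seller valuation `x' < x`,
buyer valuation `y > x`, and arbiter error rate `γ ∈ [0,1)`, a wager `λ > 0` satisfying
the three completeness inequalities exists iff `γ < 1/2`. -/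
theorem completeness_iff_biased_arbiter
    (x x' y γ : ℝ) (hx : 0 < x) (hx' : x' < x) (hy : x < y)
    (hγ0 : 0 ≤ γ) (hγ1 : γ < 1) :
    (∃ lam : ℝ, 0 < lam ∧
      x * (1 - γ) - lam * γ - x' > -x' ∧
      0 > x * γ - lam * (1 - γ) ∧
      y - x > y * γ - (x + lam) * (1 - γ)) ↔ γ < 1/2 := by
  constructor
  · rintro ⟨lam, hl, h1, h2, h3⟩
    rcases hγ0.lt_or_eq with hpos | hz
    · nlinarith [mul_pos hl hx, mul_pos (mul_pos hl hx) hpos]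
    · linarith
  · intro hγ
    exact ⟨x, hx, by nlinarith, by nlinarith, by nlinarith⟩
end

section
/- Let ε > 0 and let x, x', y be real numbers with x' < x, y - ε ≥ x and x ≥ ε, and let γ ∈ [0, 1). Then there exists a wager λ > 0 satisfying the three ε-soundness inequalities (4) x·(1-γ) - λ·γ - x' - ε ≥ -x', (5) -ε ≥ x·γ - λ·(1-γ), and (6) y - x - ε ≥ y·γ - (x+λ)·(1-γ), if and only if γ < 1/2 and ε ≤ x·(1-2γ). -/
/-- ε-soundness of the escrow contract: for `ε > 0`, price `x` with `x' < x`,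
`y - ε ≥ x`, `x ≥ ε`, and arbiter error rate `γ ∈ [0,1)`, a wager `λ > 0` satisfying
the three ε-soundness inequalities exists iff `γ < 1/2` and `ε ≤ x·(1-2γ)`. -/
theorem soundness_iff
    (ε x x' y γ : ℝ) (hε : 0 < ε) (hx' : x' < x) (hy : y - ε ≥ x) (hx : x ≥ ε)
    (hγ0 : 0 ≤ γ) (hγ1 : γ < 1) :
    (∃ lam : ℝ, 0 < lam ∧
      x * (1 - γ) - lam * γ - x' - ε ≥ -x' ∧
      -ε ≥ x * γ - lam * (1 - γ) ∧
      y - x - ε ≥ y * γ - (x + lam) * (1 - γ)) ↔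
    (γ < 1/2 ∧ ε ≤ x * (1 - 2 * γ)) := by
  have hxpos : 0 < x := lt_of_lt_of_le hε hx
  have h1γ : 0 < 1 - γ := by linarith
  constructor
  · rintro ⟨l, hl, h4, h5, h6⟩
    have key : ε ≤ x * (1 - 2 * γ) := by
      nlinarith [mul_nonneg h1γ.le (by linarith : (0:ℝ) ≤ x * (1 - γ) - l * γ - ε),
        mul_nonneg hγ0 (by linarith : (0:ℝ) ≤ l * (1 - γ) - x * γ - ε)]
    refine ⟨by nlinarith, key⟩
  · rintro ⟨hγ, hxe⟩
    have hlpos : 0 < (x * γ + ε) / (1 - γ) := by positivity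
    refine ⟨(x * γ + ε) / (1 - γ), hlpos, ?_, ?_, ?_⟩ <;>
    · have hc : (x * γ + ε) / (1 - γ) * (1 - γ) = x * γ + ε :=
        div_mul_cancel₀ _ h1γ.ne'
      nlinarith [mul_nonneg hlpos.le hγ0]
end

section
/- Let x, x', y be real numbers with 0 < x, x' < x and x < y, let γ be a real number with 0 ≤ γ < 1/2, and set λ = x and ε = x·(1-2γ). Then ε > 0 and all six game-theoretic security inequalities hold: (1) x·(1-γ) - λ·γ - x' > -x', (2) 0 > x·γ - λ·(1-γ), (3) y - x > y·γ - (x+λ)·(1-γ), (4) x·(1-γ) - λ·γ - x' - ε ≥ -x', (5) -ε ≥ x·γ - λ·(1-γ), and (6) y - x - ε ≥ y·γ - (x+λ)·(1-γ). Hence the contract has x·(1-2γ)-strong game-theoretic security whenever γ < 1/2 and the wager equals the price. -/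
/-- With `λ = x` and `ε = x·(1-2γ)`, the contract has `x·(1-2γ)`-strong
game-theoretic security whenever `γ < 1/2`: `ε > 0` and all six inequalities hold. -/
theorem strong_security
    (x x' y γ : ℝ) (hx : 0 < x) (hx' : x' < x) (hy : x < y)
    (hγ0 : 0 ≤ γ) (hγ : γ < 1/2) :
    let lam := x
    let ε := x * (1 - 2 * γ)
    ε > 0 ∧
    x * (1 - γ) - lam * γ - x' > -x' ∧
    0 > x * γ - lam * (1 - γ) ∧
    y - x > y * γ - (x + lam) * (1 - γ) ∧
    x * (1 - γ) - lam * γ - x' - ε ≥ -x' ∧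
    -ε ≥ x * γ - lam * (1 - γ) ∧
    y - x - ε ≥ y * γ - (x + lam) * (1 - γ) := by
  refine ⟨by nlinarith, by nlinarith, by nlinarith, by nlinarith, by nlinarith, by nlinarith, by nlinarith⟩
end

section
/- Let ω and ℓ be real numbers with ω > -ℓ (the winner's payoff ω strictly exceeds the loser's payoff -ℓ), and let γ ∈ [0, 1]. If ω·(1-γ) - ℓ·γ > 0 (an honest party strictly prefers to counter a dispute) and ω·γ - ℓ·(1-γ) < 0 (a dishonest party strictly prefers to forfeit), then γ < 1/2. Consequently, for arbitrary wager functions the contract can only be complete if the arbiter is biased in favor of honest parties. -/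
/-- For arbitrary wager functions with winner payoff `ω`, loser payoff `-ℓ`, `ω > -ℓ`,
and `γ ∈ [0,1]`: if an honest party prefers to counter and a dishonest party prefers
to forfeit, then the arbiter is biased in favor of honest parties, `γ < 1/2`. -/
theorem arbitrary_wagers_require_biased_arbiter
    (ω ℓ γ : ℝ) (hwl : ω > -ℓ) (hγ0 : 0 ≤ γ) (hγ1 : γ ≤ 1)
    (honest : ω * (1 - γ) - ℓ * γ > 0)
    (dishonest : ω * γ - ℓ * (1 - γ) < 0) :
    γ < 1/2 := by
  nlinarith [mul_pos (sub_pos.2 hwl) (sub_pos.2 hwl)]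
end

section
/- Let x ≥ 0, ε > 0 and let γ be a real number with 0 ≤ γ < 1/2. For a real number λ, the two winner-rebate security inequalities (x+λ)·(1-γ) - λ·γ - ε ≥ 0 and (x+λ)·γ - λ·(1-γ) ≤ -ε both hold if and only if λ ≥ (x·γ + ε)/(1 - 2γ). In particular, with a winner rebate of size λ = (x·γ + ε)/(1 - 2γ) the contract has ε-strong game-theoretic security. -/
/-- Winner-rebate variant: for `x ≥ 0`, `ε > 0`, `0 ≤ γ < 1/2`, the two
winner-rebate security inequalities hold iff `λ ≥ (x·γ + ε)/(1 - 2γ)`. -/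
theorem winner_rebate_security_iff
    (x ε γ lam : ℝ) (hx : 0 ≤ x) (hε : 0 < ε) (hγ0 : 0 ≤ γ) (hγ : γ < 1/2) :
    ((x + lam) * (1 - γ) - lam * γ - ε ≥ 0 ∧
     (x + lam) * γ - lam * (1 - γ) ≤ -ε) ↔
    lam ≥ (x * γ + ε) / (1 - 2 * γ) := by
  have hd : 0 < 1 - 2 * γ := by linarith
  constructor
  · rintro ⟨h1, h2⟩
    rw [ge_iff_le, div_le_iff₀ hd]; nlinarith
  · intro h
    rw [ge_iff_le, div_le_iff₀ hd] at h
    constructor <;> nlinarith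
end

section
/- Let x > 0 and let γ be a real number with 0 ≤ γ < 1/2, and set λ = x/2 and ε = x·(1-2γ)/2. Then ε > 0, an honest seller gains at least ε by countering a dispute: x·(1-γ) - λ ≥ ε, and a dishonest seller loses at least ε by countering rather than forfeiting: x·γ - λ ≤ -ε. Hence when the contract withholds all wagers (the winner is not repaid their wager) it has (x·(1-2γ)/2)-strong game-theoretic security with wager λ = x/2. -/
/-- Withholding-wager variant: with `λ = x/2` and `ε = x·(1-2γ)/2`, we have `ε > 0`,
an honest seller gains at least `ε` by countering, and a dishonest seller loses at
least `ε` by countering rather than forfeiting. -/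
theorem withholding_wager_security
    (x γ : ℝ) (hx : 0 < x) (hγ0 : 0 ≤ γ) (hγ : γ < 1/2) :
    let lam := x / 2
    let ε := x * (1 - 2 * γ) / 2
    ε > 0 ∧ x * (1 - γ) - lam ≥ ε ∧ x * γ - lam ≤ -ε := by
  refine ⟨by nlinarith, by nlinarith, by nlinarith⟩
end

section
/- Let γ be a real number with 0 < γ < 1, and let x, ε, τ be real numbers. Then (x·(1-γ) - ε - τ)/γ > (x·γ + ε + τ)/(1-γ) if and only if ε + τ < x·(1-2γ). Consequently, with transaction fees of size τ per move, there exists a wager λ making the contract ε-sound if and only if ε ≤ x·(1-2γ) - τ; in particular the transaction fee must satisfy τ < x·(1-2γ). -/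
/-- With transaction fees `τ` per move and arbiter error rate `0 < γ < 1`, a wager
making the contract ε-sound exists iff the upper bound on `λ` exceeds the lower
bound, which holds iff `ε + τ < x·(1-2γ)`. -/
theorem soundness_with_fees_iff
    (γ x ε τ : ℝ) (hγ0 : 0 < γ) (hγ1 : γ < 1) :
    (x * (1 - γ) - ε - τ) / γ > (x * γ + ε + τ) / (1 - γ) ↔
    ε + τ < x * (1 - 2 * γ) := by
  rw [gt_iff_lt, div_lt_div_iff₀ (by linarith) hγ0]
  constructor <;> intro h <;> nlinarith
end

section
/- Let x, x' be real numbers with 0 < x and x' < x, let γ be a real number with 0 ≤ γ < 1/2, and let τ be a real number with 0 < τ < x·(1-2γ) and x - x' > τ. Set λ = x and ε = x·(1-2γ) - τ. Then ε > 0 and: an honest seller gains at least ε by countering a dispute net of the fee, x·(1-γ) - λ·γ - x' - τ ≥ ε - x'; a dishonest seller loses at least ε by countering rather than forfeiting net of the fee, x·γ - λ·(1-γ) - τ ≤ -ε; and a seller profits from honestly completing the trade, x - x' - τ > 0. Hence with transaction fees of size τ the contract has (x·(1-2γ) - τ)-strong game-theoretic security when λ = x and x - x' > τ. -/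
/-- With transaction fees `τ`, the contract has `(x·(1-2γ) - τ)`-strong
game-theoretic security when `λ = x` and `x - x' > τ`. -/
theorem strong_security_with_fees
    (x x' γ τ : ℝ) (hx : 0 < x) (hx' : x' < x)
    (hγ0 : 0 ≤ γ) (hγ : γ < 1/2)
    (hτ0 : 0 < τ) (hτ : τ < x * (1 - 2 * γ)) (hval : x - x' > τ) :
    let lam := x
    let ε := x * (1 - 2 * γ) - τ
    ε > 0 ∧
    x * (1 - γ) - lam * γ - x' - τ ≥ ε - x' ∧
    x * γ - lam * (1 - γ) - τ ≤ -ε ∧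
    x - x' - τ > 0 := by
  refine ⟨by linarith, by nlinarith, by nlinarith, by linarith⟩
end
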